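/- Let A be the m×m downshift matrix with m ≥ 2. Then the relative Frobenius-norm distance from A to the set of Hermitian negative semidefinite matrices equals √3/2. -/

import Mathlib

open Matrix
open scoped ComplexOrder

/-- The `m × m` downshift matrix: ones on the subdiagonal, zeros elsewhere. -/
def downshift (m : ℕ) : Matrix (Fin m) (Fin m) ℂ :=
  Matrix.of fun i j => if (i : ℕ) = (j : ℕ) + 1 then 1 else 0

/-- The Frobenius norm of a matrix. -/
noncomputable def frob {m : ℕ} (M : Matrix (Fin m) (Fin m) ℂ) : ℝ :=
  Real.sqrt (∑ i, ∑ j, ‖M i j‖ ^ 2)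

/-!
Write the downshift `A` as `A_H + A_A` with `A_H` Hermitian and `A_A` skew-Hermitian. For a
Hermitian `H` the matrices `A_H - H` and `A_A` are Frobenius-orthogonal, so
`‖A - H‖² = ‖A_H - H‖² + ‖A_A‖²`. Conjugating by an eigenvector unitary of `A_H` and keeping only
the diagonal shows `‖A_H - H‖² ≥ Σ max(λᵢ, 0)²` when `H ≤ 0`, with equality for the negative part
of `A_H`. For the downshift `tr A² = 0`, whence `‖A_H‖² = ‖A_A‖² = ‖A‖² / 2 = (m - 1) / 2`, and
conjugation by `diag ((-1)ⁱ)` sends `A_H` to `-A_H`, so the spectrum of `A_H` is symmetric and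
its positive eigenvalues carry half of `‖A_H‖²`. The squared distance is therefore
`3 (m - 1) / 4` against `‖A‖² = m - 1`.
-/

noncomputable def frobSq {n : Type*} [Fintype n] (M : Matrix n n ℂ) : ℝ :=
  ∑ i, ∑ j, ‖M i j‖ ^ 2

section Frobenius

variable {n : Type*} [Fintype n]

lemma frob_eq_sqrt_frobSq {m : ℕ} (M : Matrix (Fin m) (Fin m) ℂ) : frob M = √(frobSq M) := rfl

lemma frobSq_eq_re_trace (M : Matrix n n ℂ) : frobSq M = (trace (Mᴴ * M)).re := by
  simp only [frobSq, trace, diag, mul_apply, conjTranspose_apply, Complex.re_sum]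
  rw [Finset.sum_comm]
  refine Finset.sum_congr rfl fun i _ => Finset.sum_congr rfl fun j _ => ?_
  rw [Complex.star_def, Complex.conj_mul']
  norm_cast

lemma sum_sq_norm_diag_le_frobSq (M : Matrix n n ℂ) : ∑ i, ‖M i i‖ ^ 2 ≤ frobSq M :=
  Finset.sum_le_sum fun i _ =>
    Finset.single_le_sum (f := fun j => ‖M i j‖ ^ 2) (fun _ _ => sq_nonneg _) (Finset.mem_univ i)

lemma frobSq_diagonal [DecidableEq n] (d : n → ℂ) : frobSq (diagonal d) = ∑ i, ‖d i‖ ^ 2 := by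
  refine Finset.sum_congr rfl fun i _ => ?_
  rw [Finset.sum_eq_single i (fun j _ hji => by simp [diagonal_apply_ne' d hji]) (by simp)]
  simp

lemma frobSq_conjStarAlgAut [DecidableEq n] (U : unitary (Matrix n n ℂ)) (M : Matrix n n ℂ) :
    frobSq (Unitary.conjStarAlgAut ℂ _ U M) = frobSq M := by
  have hU : ∀ X, star (U : Matrix n n ℂ) * (U * X) = X := fun X => by
    rw [← mul_assoc, Unitary.star_mul_self_of_mem U.2, one_mul]
  simp only [frobSq_eq_re_trace, Unitary.conjStarAlgAut_apply, ← star_eq_conjTranspose, star_mul,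
    star_star, mul_assoc, hU]
  rw [trace_mul_comm]
  simp only [mul_assoc, Unitary.star_mul_self_of_mem U.2, mul_one]

-- The cross term `tr (XᴴY + YᴴX) = tr (XY - YX)` vanishes.
lemma frobSq_add_of_isHermitian_of_conjTranspose_eq_neg {X Y : Matrix n n ℂ}
    (hX : X.IsHermitian) (hY : Yᴴ = -Y) : frobSq (X + Y) = frobSq X + frobSq Y := by
  simp only [frobSq_eq_re_trace, conjTranspose_add, hX.eq, hY, add_mul, mul_add, neg_mul,
    trace_add, trace_neg, trace_mul_comm Y X, Complex.add_re, Complex.neg_re]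
  ring

lemma frobSq_smul (c : ℂ) (M : Matrix n n ℂ) : frobSq (c • M) = ‖c‖ ^ 2 * frobSq M := by
  simp [frobSq, mul_pow, Finset.mul_sum]

end Frobenius

noncomputable def hermPart {n : Type*} (A : Matrix n n ℂ) : Matrix n n ℂ := (2⁻¹ : ℂ) • (A + Aᴴ)

noncomputable def skewPart {n : Type*} (A : Matrix n n ℂ) : Matrix n n ℂ := (2⁻¹ : ℂ) • (A - Aᴴ)

section HermitianPart

variable {n : Type*}

lemma hermPart_add_skewPart (A : Matrix n n ℂ) : hermPart A + skewPart A = A := by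
  rw [hermPart, skewPart, ← smul_add, add_add_sub_cancel, ← two_smul ℂ, smul_smul,
    inv_mul_cancel₀ two_ne_zero, one_smul]

lemma isHermitian_hermPart (A : Matrix n n ℂ) : (hermPart A).IsHermitian := by
  simp [hermPart, IsHermitian, add_comm]

lemma conjTranspose_skewPart (A : Matrix n n ℂ) : (skewPart A)ᴴ = -skewPart A := by
  simp [skewPart, ← smul_neg]

lemma frobSq_sub_of_isHermitian [Fintype n] (A : Matrix n n ℂ) {H : Matrix n n ℂ}
    (hH : H.IsHermitian) :
    frobSq (A - H) = frobSq (hermPart A - H) + frobSq (skewPart A) := by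
  rw [← frobSq_add_of_isHermitian_of_conjTranspose_eq_neg ((isHermitian_hermPart A).sub hH)
    (conjTranspose_skewPart A), sub_add_eq_add_sub, hermPart_add_skewPart]

variable [Fintype n] {A : Matrix n n ℂ}

lemma re_trace_conjTranspose_mul_self : (trace (Aᴴ * Aᴴ)).re = (trace (A * A)).re := by
  rw [← conjTranspose_mul, trace_conjTranspose, Complex.star_def, Complex.conj_re]

lemma frobSq_hermPart_of_re_trace_mul_self (hA : (trace (A * A)).re = 0) :
    frobSq (hermPart A) = frobSq A / 2 := by
  have hAA : (trace (Aᴴ * Aᴴ)).re = 0 := by rw [re_trace_conjTranspose_mul_self, hA]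
  rw [hermPart, frobSq_smul, frobSq_eq_re_trace, frobSq_eq_re_trace]
  simp only [conjTranspose_add, conjTranspose_conjTranspose, add_mul, mul_add, trace_add,
    Complex.add_re, hA, hAA, trace_mul_comm A Aᴴ]
  norm_num
  ring

lemma frobSq_skewPart_of_re_trace_mul_self (hA : (trace (A * A)).re = 0) :
    frobSq (skewPart A) = frobSq A / 2 := by
  have hAA : (trace (Aᴴ * Aᴴ)).re = 0 := by rw [re_trace_conjTranspose_mul_self, hA]
  rw [skewPart, frobSq_smul, frobSq_eq_re_trace, frobSq_eq_re_trace]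
  simp only [conjTranspose_sub, conjTranspose_conjTranspose, sub_mul, mul_sub, trace_sub,
    Complex.sub_re, hA, hAA, trace_mul_comm A Aᴴ]
  norm_num
  ring

end HermitianPart

lemma sq_max_zero_le_sq_norm_sub (a : ℝ) {k : ℂ} (hk : k.re ≤ 0) :
    max a 0 ^ 2 ≤ ‖(a : ℂ) - k‖ ^ 2 := by
  have hre : max a 0 ^ 2 ≤ (a - k.re) ^ 2 := by
    rcases le_total a 0 with ha | ha
    · rw [max_eq_right ha]; nlinarith [sq_nonneg (a - k.re)]
    · rw [max_eq_left ha]; nlinarith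
  rw [Complex.sq_norm, Complex.normSq_apply]
  simp only [Complex.sub_re, Complex.ofReal_re, Complex.sub_im, Complex.ofReal_im]
  nlinarith [sq_nonneg k.im]

lemma Matrix.charpoly_conjStarAlgAut {n : Type*} [Fintype n] [DecidableEq n]
    (U : unitary (Matrix n n ℂ)) (M : Matrix n n ℂ) :
    (Unitary.conjStarAlgAut ℂ _ U M).charpoly = M.charpoly := by
  rw [Unitary.conjStarAlgAut_apply, charpoly_mul_comm, ← mul_assoc]
  simp

lemma Matrix.roots_charpoly_diagonal {n R : Type*} [Fintype n] [DecidableEq n] [CommRing R]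
    [IsDomain R] (d : n → R) : (diagonal d).charpoly.roots = Finset.univ.val.map d := by
  rw [charpoly_diagonal, Polynomial.roots_prod _ _ (Finset.prod_ne_zero_iff.2 fun i _ =>
    Polynomial.X_sub_C_ne_zero (d i))]
  simp

lemma sq_max_zero_add_sq_max_zero_neg (x : ℝ) : max x 0 ^ 2 + max (-x) 0 ^ 2 = x ^ 2 := by
  rcases le_total x 0 with hx | hx
  · rw [max_eq_right hx, max_eq_left (neg_nonneg.2 hx)]; ring
  · rw [max_eq_left hx, max_eq_right (neg_nonpos.2 hx)]; ring

namespace Matrix.IsHermitian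

variable {n : Type*} [Fintype n] [DecidableEq n] {B : Matrix n n ℂ} (hB : B.IsHermitian)

lemma sum_sq_max_eigenvalues_le_frobSq_sub {H : Matrix n n ℂ} (hH : (-H).PosSemidef) :
    ∑ i, max (hB.eigenvalues i) 0 ^ 2 ≤ frobSq (B - H) := by
  let K := Unitary.conjStarAlgAut ℂ _ (star hB.eigenvectorUnitary) H
  have hK : ∀ i, (K i i).re ≤ 0 := fun i => by
    have hnK : (-K).PosSemidef := by
      rw [← map_neg, Unitary.conjStarAlgAut_star_apply]
      exact hH.conjTranspose_mul_mul_same _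
    simpa using (Complex.nonneg_iff.mp (hnK.diag_nonneg (i := i))).1
  calc ∑ i, max (hB.eigenvalues i) 0 ^ 2
      ≤ ∑ i, ‖(diagonal (RCLike.ofReal ∘ hB.eigenvalues) - K : Matrix n n ℂ) i i‖ ^ 2 :=
        Finset.sum_le_sum fun i _ => by simpa using sq_max_zero_le_sq_norm_sub _ (hK i)
    _ ≤ frobSq (diagonal (RCLike.ofReal ∘ hB.eigenvalues) - K) := sum_sq_norm_diag_le_frobSq _
    _ = frobSq (B - H) := by
        rw [← hB.conjStarAlgAut_star_eigenvectorUnitary, ← map_sub, frobSq_conjStarAlgAut]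

lemma exists_negSemidef_frobSq_sub_eq :
    ∃ H : Matrix n n ℂ, (-H).PosSemidef ∧
      frobSq (B - H) = ∑ i, max (hB.eigenvalues i) 0 ^ 2 := by
  refine ⟨Unitary.conjStarAlgAut ℂ _ hB.eigenvectorUnitary
    (diagonal (RCLike.ofReal ∘ fun i => min (hB.eigenvalues i) 0)), ?_, ?_⟩
  · rw [← map_neg, diagonal_neg, Unitary.conjStarAlgAut_apply]
    refine PosSemidef.mul_mul_conjTranspose_same (posSemidef_diagonal_iff.2 fun i => ?_) _
    simp [← Complex.ofReal_neg, Complex.zero_le_real]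
  · conv_lhs => enter [1, 1]; rw [hB.spectral_theorem]
    rw [← map_sub, frobSq_conjStarAlgAut, diagonal_sub, frobSq_diagonal]
    refine Finset.sum_congr rfl fun i _ => ?_
    have h : hB.eigenvalues i - min (hB.eigenvalues i) 0 = max (hB.eigenvalues i) 0 := by
      linarith [min_add_max (hB.eigenvalues i) 0]
    simp only [Function.comp_apply, ← RCLike.ofReal_sub, RCLike.norm_ofReal, sq_abs, h]

lemma sum_sq_eigenvalues : ∑ i, hB.eigenvalues i ^ 2 = frobSq B := by
  conv_rhs => rw [hB.spectral_theorem]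
  rw [frobSq_conjStarAlgAut, frobSq_diagonal]
  simp [sq_abs]

lemma sum_eigenvalues_comp_neg (hneg : (-B).charpoly = B.charpoly) (f : ℝ → ℝ) :
    ∑ i, f (hB.eigenvalues i) = ∑ i, f (-hB.eigenvalues i) := by
  have hroots : Finset.univ.val.map (RCLike.ofReal ∘ hB.eigenvalues : n → ℂ) =
      Finset.univ.val.map (RCLike.ofReal ∘ fun i => -hB.eigenvalues i : n → ℂ) := by
    have hnegB : -B = Unitary.conjStarAlgAut ℂ _ hB.eigenvectorUnitary
        (diagonal (RCLike.ofReal ∘ fun i => -hB.eigenvalues i)) := by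
      conv_lhs => rw [hB.spectral_theorem]
      rw [← map_neg, diagonal_neg]
      congr 2
      ext i
      simp
    rw [← hB.roots_charpoly_eq_eigenvalues, ← hneg, hnegB, charpoly_conjStarAlgAut,
      roots_charpoly_diagonal]
  rw [← Multiset.map_map, ← Multiset.map_map] at hroots
  have hspec := Multiset.map_injective RCLike.ofReal_injective hroots
  calc ∑ i, f (hB.eigenvalues i) = ((Finset.univ.val.map hB.eigenvalues).map f).sum := by
        rw [Multiset.map_map]; rfl
    _ = ∑ i, f (-hB.eigenvalues i) := by rw [hspec, Multiset.map_map]; rfl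

lemma sum_sq_max_eigenvalues_of_charpoly_neg (hneg : (-B).charpoly = B.charpoly) :
    ∑ i, max (hB.eigenvalues i) 0 ^ 2 = frobSq B / 2 := by
  have hsymm := hB.sum_eigenvalues_comp_neg hneg fun x => max x 0 ^ 2
  have htotal : ∑ i, (max (hB.eigenvalues i) 0 ^ 2 + max (-hB.eigenvalues i) 0 ^ 2)
      = frobSq B := by
    simp only [sq_max_zero_add_sq_max_zero_neg, hB.sum_sq_eigenvalues]
  rw [Finset.sum_add_distrib] at htotal
  linarith

end Matrix.IsHermitian

theorem isLeast_frobSq_sub_negSemidef {n : Type*} [Fintype n] [DecidableEq n]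
    (A : Matrix n n ℂ) :
    IsLeast {d | ∃ H : Matrix n n ℂ, (-H).PosSemidef ∧ d = frobSq (A - H)}
      (∑ i, max ((isHermitian_hermPart A).eigenvalues i) 0 ^ 2 + frobSq (skewPart A)) := by
  have hB := isHermitian_hermPart A
  constructor
  · obtain ⟨H, hH, hdist⟩ := hB.exists_negSemidef_frobSq_sub_eq
    refine ⟨H, hH, ?_⟩
    rw [frobSq_sub_of_isHermitian A (isHermitian_neg_iff.mp hH.isHermitian), hdist]
  · rintro _ ⟨H, hH, rfl⟩
    rw [frobSq_sub_of_isHermitian A (isHermitian_neg_iff.mp hH.isHermitian)]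
    exact add_le_add_left (hB.sum_sq_max_eigenvalues_le_frobSq_sub hH) _

section Downshift

variable {m : ℕ}

def altSign (m : ℕ) : Matrix (Fin m) (Fin m) ℂ := diagonal fun i => (-1) ^ (i : ℕ)

lemma altSign_mul_altSign : altSign m * altSign m = 1 := by
  simp [altSign, ← pow_add, ← two_mul, pow_mul]

lemma conjTranspose_altSign : (altSign m)ᴴ = altSign m := by
  simp [altSign]

lemma altSign_mul_downshift_mul_altSign : altSign m * downshift m * altSign m = -downshift m := by
  ext i j
  by_cases h : (i : ℕ) = j + 1
  · simp [altSign, downshift, h, pow_succ, ← mul_pow]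
  · simp [altSign, downshift, h]

lemma charpoly_neg_hermPart_downshift :
    (-hermPart (downshift m)).charpoly = (hermPart (downshift m)).charpoly := by
  have hadj : altSign m * (downshift m)ᴴ * altSign m = -(downshift m)ᴴ := by
    simpa [conjTranspose_altSign, mul_assoc] using
      congrArg conjTranspose (altSign_mul_downshift_mul_altSign (m := m))
  have hconj : altSign m * hermPart (downshift m) * altSign m = -hermPart (downshift m) := by
    rw [hermPart, Matrix.mul_smul, Matrix.smul_mul, mul_add, add_mul,
      altSign_mul_downshift_mul_altSign, hadj, ← neg_add, smul_neg]
  rw [← hconj, mul_assoc, charpoly_mul_comm, mul_assoc, altSign_mul_altSign, mul_one]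

lemma trace_downshift_mul_self : trace (downshift m * downshift m) = 0 := by
  simp only [trace, diag, mul_apply, downshift, of_apply]
  refine Finset.sum_eq_zero fun i _ => Finset.sum_eq_zero fun j _ => ?_
  split_ifs <;> first | omega | simp

lemma frobSq_downshift : frobSq (downshift m) = (m - 1 : ℕ) := by
  have hsq : ∀ i j : Fin m, ‖downshift m i j‖ ^ 2 = if (i : ℕ) = j + 1 then 1 else 0 :=
    fun i j => by simp only [downshift, of_apply]; split_ifs <;> simp
  have hcol : ∀ j : Fin m, ∑ i : Fin m, (if (i : ℕ) = j + 1 then (1 : ℝ) else 0)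
      = if (j : ℕ) + 1 < m then 1 else 0 := fun j => by
    rw [Fin.sum_univ_eq_sum_range (fun i => if i = (j : ℕ) + 1 then (1 : ℝ) else 0),
      Finset.sum_ite_eq']
    simp only [Finset.mem_range]
  have hcard : (Finset.range m).filter (fun j => j + 1 < m) = Finset.range (m - 1) := by
    ext j; simp only [Finset.mem_filter, Finset.mem_range]; omega
  simp only [frobSq, hsq]
  rw [Finset.sum_comm]
  simp only [hcol]
  rw [Fin.sum_univ_eq_sum_range (fun j => if j + 1 < m then (1 : ℝ) else 0), Finset.sum_boole,
    hcard, Finset.card_range]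

end Downshift

/-- The relative Frobenius-norm distance from the downshift matrix to the set
of Hermitian negative semidefinite matrices equals `√3/2`, and it is attained. -/
theorem dist_downshift_negSemidef (m : ℕ) (hm : 2 ≤ m) :
    IsLeast {d : ℝ | ∃ H : Matrix (Fin m) (Fin m) ℂ, (-H).PosSemidef ∧
      d = frob (downshift m - H) / frob (downshift m)} (Real.sqrt 3 / 2) := by
  have hpos : 0 < frobSq (downshift m) := by
    rw [frobSq_downshift]
    exact_mod_cast (by omega : 0 < m - 1)
  have htr : (trace (downshift m * downshift m)).re = 0 := by
    rw [trace_downshift_mul_self, Complex.zero_re]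
  have hmin := isLeast_frobSq_sub_negSemidef (downshift m)
  rw [(isHermitian_hermPart _).sum_sq_max_eigenvalues_of_charpoly_neg
      charpoly_neg_hermPart_downshift, frobSq_hermPart_of_re_trace_mul_self htr,
    frobSq_skewPart_of_re_trace_mul_self htr] at hmin
  have hratio : frobSq (downshift m) / 2 / 2 + frobSq (downshift m) / 2 =
      3 / 4 * frobSq (downshift m) := by ring
  have himage : {d : ℝ | ∃ H : Matrix (Fin m) (Fin m) ℂ, (-H).PosSemidef ∧
      d = frob (downshift m - H) / frob (downshift m)} =
      (fun d => √d / √(frobSq (downshift m))) ''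
        {d | ∃ H : Matrix (Fin m) (Fin m) ℂ, (-H).PosSemidef ∧ d = frobSq (downshift m - H)} := by
    ext d
    simp [frob_eq_sqrt_frobSq, eq_comm (a := d)]
  have hvalue : √3 / 2 = √(3 / 4 * frobSq (downshift m)) / √(frobSq (downshift m)) := by
    rw [Real.sqrt_mul (by norm_num), mul_div_cancel_right₀ _ (Real.sqrt_pos.2 hpos).ne',
      Real.sqrt_div' _ (by norm_num : (0 : ℝ) ≤ 4), show (4 : ℝ) = 2 ^ 2 by norm_num,
      Real.sqrt_sq (by norm_num)]
  rw [himage, hvalue, ← hratio]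
  exact Monotone.map_isLeast (fun _ _ h => by gcongr) hmin
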